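/- (Corollary 1) Let (x^k, y^k, γ^k) be iterates of the two-block linearized ADMM (Algorithm 1): x^{k+1} is a global minimizer of f̄^k, y^{k+1} is a global minimizer of h̄^k, and γ^{k+1} = γ^k + β(Ax^{k+1} + By^{k+1}), under Assumption 1 with the parameter choice (★), and suppose additionally that g does not depend on y (i.e. g(x, y) = g(x) for all y). Then the dual variable sequence {γ^k} is bounded. -/

import Mathlib

open Matrix Filter
open scoped RealInnerProductSpace

noncomputable section

abbrev Vec (m : ℕ) := EuclideanSpace ℝ (Fin m)

def mv {m l : ℕ} (M : Matrix (Fin m) (Fin l) ℝ) (v : Vec l) : Vec m := WithLp.toLp 2 (M.mulVec v)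

def gradx {p q : ℕ} (g : Vec p → Vec q → ℝ) (x : Vec p) (y : Vec q) : Vec p :=
  gradient (fun x' => g x' y) x

def grady {p q : ℕ} (g : Vec p → Vec q → ℝ) (x : Vec p) (y : Vec q) : Vec q :=
  gradient (g x) y

def LipschitzDifferentiable {m : ℕ} (h : Vec m → ℝ) (L : ℝ) : Prop :=
  Differentiable ℝ h ∧ ∀ y y' : Vec m, ‖gradient h y - gradient h y'‖ ≤ L * ‖y - y'‖

def LipschitzDifferentiable2 {p q : ℕ} (g : Vec p → Vec q → ℝ) (L : ℝ) : Prop :=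
  (∀ y, Differentiable ℝ fun x => g x y) ∧ (∀ x, Differentiable ℝ (g x)) ∧
    ∀ x x' : Vec p, ∀ y y' : Vec q,
      Real.sqrt (‖gradx g x y - gradx g x' y'‖ ^ 2 + ‖grady g x y - grady g x' y'‖ ^ 2) ≤
        L * Real.sqrt (‖x - x'‖ ^ 2 + ‖y - y'‖ ^ 2)

def Lagr {p q n : ℕ} (β : ℝ) (g : Vec p → Vec q → ℝ) (f : Vec p → ℝ) (h : Vec q → ℝ)
    (A : Matrix (Fin n) (Fin p) ℝ) (B : Matrix (Fin n) (Fin q) ℝ)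
    (x : Vec p) (y : Vec q) (γ : Vec n) : ℝ :=
  g x y + f x + h y + ⟪γ, mv A x + mv B y⟫ + β / 2 * ‖mv A x + mv B y‖ ^ 2

def fbar {p q n : ℕ} (f : Vec p → ℝ) (g : Vec p → Vec q → ℝ)
    (A : Matrix (Fin n) (Fin p) ℝ) (B : Matrix (Fin n) (Fin q) ℝ) (β Lx : ℝ)
    (xk : Vec p) (yk : Vec q) (γk : Vec n) (x : Vec p) : ℝ :=
  f x + ⟪γk, mv A x⟫ + Lx / 2 * ‖x - xk‖ ^ 2 +
    ⟪x - xk, gradx g xk yk + β • mv Aᵀ (mv A xk + mv B yk)⟫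

def hbar {p q n : ℕ} (g : Vec p → Vec q → ℝ) (h : Vec q → ℝ)
    (A : Matrix (Fin n) (Fin p) ℝ) (B : Matrix (Fin n) (Fin q) ℝ) (β Ly : ℝ)
    (xk1 : Vec p) (yk : Vec q) (γk : Vec n) (y : Vec q) : ℝ :=
  ⟪γk, mv B y⟫ + Ly / 2 * ‖y - yk‖ ^ 2 + β / 2 * ‖mv A xk1 + mv B y‖ ^ 2 +
    ⟪y - yk, grady g xk1 yk + gradient h yk⟫

def IsSmallestEigenvalue {m : ℕ} (M : Matrix (Fin m) (Fin m) ℝ) (lam : ℝ) : Prop :=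
  (∃ v : Fin m → ℝ, v ≠ 0 ∧ M.mulVec v = lam • v) ∧
    ∀ μ : ℝ, (∃ v : Fin m → ℝ, v ≠ 0 ∧ M.mulVec v = μ • v) → lam ≤ μ

def IsLargestEigenvalue {m : ℕ} (M : Matrix (Fin m) (Fin m) ℝ) (lam : ℝ) : Prop :=
  (∃ v : Fin m → ℝ, v ≠ 0 ∧ M.mulVec v = lam • v) ∧
    ∀ μ : ℝ, (∃ v : Fin m → ℝ, v ≠ 0 ∧ M.mulVec v = μ • v) → μ ≤ lam

def RegularSubgradientAt {m : ℕ} (f : Vec m → ℝ) (x₀ v : Vec m) : Prop :=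
  ∀ ε > 0, ∀ᶠ x in nhds x₀, f x₀ + ⟪v, x - x₀⟫ - ε * ‖x - x₀‖ ≤ f x

/-!
Since `g` does not depend on `y`, the optimality condition of the `y`-step together with the dual
update reads `Bᵀγ^{k+1} = -L_y (y^{k+1} - y^k) - ∇h(y^k)`. Every `γ^k - γ^0` lies in `Im B`, where
`‖Bᵀw‖² ≥ λ_{BᵀB} ‖w‖²`, so the dual sequence is bounded as soon as `y^k` is.

To bound `y^k`: the same identity controls `‖Bᵀ(γ^{k+2} - γ^{k+1})‖`, hence the residual
`β‖Ax^k + By^k‖²` gained by the dual update, by the last two `y`-steps. This gain is absorbed by the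
decrease of the Lagrangian in the two primal steps, so `L_β(x^k, y^k, γ^k) + 2‖y^k - y^{k-1}‖²` is
nonincreasing. Shifting `y^k` by some `s^k` with `B s^k = Ax^k + By^k` lands on the feasible set
and lowers the Lagrangian by at most `‖y^k - y^{k-1}‖²`, so the objective stays bounded along the
feasible points `(x^k, y^k - s^k)`. Coercivity bounds `y^k - s^k`, and `s^k` is bounded because
the residuals are.
-/

section MatrixVector

variable {m l : ℕ} (M : Matrix (Fin m) (Fin l) ℝ)

lemma mv_add (u v : Vec l) : mv M (u + v) = mv M u + mv M v := by
  simp [mv, mulVec_add]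

lemma mv_smul (c : ℝ) (v : Vec l) : mv M (c • v) = c • mv M v := by
  simp [mv, mulVec_smul]

lemma mv_sub (u v : Vec l) : mv M (u - v) = mv M u - mv M v := by
  simp [mv, mulVec_sub]

lemma mv_mul {k : ℕ} (N : Matrix (Fin l) (Fin k) ℝ) (v : Vec k) :
    mv (M * N) v = mv M (mv N v) := by
  simp [mv, mulVec_mulVec]

lemma inner_mv_transpose (u : Vec m) (v : Vec l) : ⟪mv Mᵀ u, v⟫ = ⟪u, mv M v⟫ := by
  simp only [mv, EuclideanSpace.inner_eq_star_dotProduct, star_trivial, mulVec_transpose,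
    dotProduct_mulVec, dotProduct_comm]

lemma inner_mv_transpose_mul_self (v : Vec l) : ⟪v, mv (Mᵀ * M) v⟫ = ‖mv M v‖ ^ 2 := by
  rw [mv_mul, real_inner_comm, inner_mv_transpose, real_inner_self_eq_norm_sq]

end MatrixVector

section Spectral

variable {m : ℕ} {M : Matrix (Fin m) (Fin m) ℝ}

lemma Matrix.IsHermitian.exists_mulVec_eq_eigenvalues_smul (hM : M.IsHermitian) (i : Fin m) :
    ∃ v : Fin m → ℝ, v ≠ 0 ∧ M *ᵥ v = hM.eigenvalues i • v :=
  ⟨_, fun h0 => hM.eigenvectorBasis.orthonormal.ne_zero i (congrArg (WithLp.toLp 2) h0),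
    hM.mulVec_eigenvectorBasis i⟩

lemma Matrix.IsHermitian.inner_mv_self_eq_sum (hM : M.IsHermitian) (v : Vec m) :
    ⟪v, mv M v⟫ = ∑ i, hM.eigenvalues i * ⟪hM.eigenvectorBasis i, v⟫ ^ 2 := by
  rw [← hM.eigenvectorBasis.sum_inner_mul_inner]
  refine Finset.sum_congr rfl fun i _ => ?_
  have hMi : mv M (hM.eigenvectorBasis i) = hM.eigenvalues i • hM.eigenvectorBasis i :=
    congrArg (WithLp.toLp 2) (hM.mulVec_eigenvectorBasis i)
  have hMT : Mᵀ = M := by simpa using hM.eq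
  have hsymm := inner_mv_transpose M (hM.eigenvectorBasis i) v
  rw [hMT, hMi, real_inner_smul_left] at hsymm
  rw [← hsymm, real_inner_comm v]
  ring

lemma Matrix.IsHermitian.inner_mv_self_le (hM : M.IsHermitian) {c : ℝ}
    (hc : ∀ μ : ℝ, (∃ v : Fin m → ℝ, v ≠ 0 ∧ M *ᵥ v = μ • v) → μ ≤ c) (v : Vec m) :
    ⟪v, mv M v⟫ ≤ c * ‖v‖ ^ 2 := by
  rw [hM.inner_mv_self_eq_sum, ← hM.eigenvectorBasis.sum_sq_inner_right, Finset.mul_sum]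
  exact Finset.sum_le_sum fun i _ =>
    mul_le_mul_of_nonneg_right (hc _ (hM.exists_mulVec_eq_eigenvalues_smul i)) (sq_nonneg _)

lemma Matrix.IsHermitian.le_inner_mv_self (hM : M.IsHermitian) {c : ℝ}
    (hc : ∀ μ : ℝ, (∃ v : Fin m → ℝ, v ≠ 0 ∧ M *ᵥ v = μ • v) → c ≤ μ) (v : Vec m) :
    c * ‖v‖ ^ 2 ≤ ⟪v, mv M v⟫ := by
  rw [hM.inner_mv_self_eq_sum, ← hM.eigenvectorBasis.sum_sq_inner_right, Finset.mul_sum]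
  exact Finset.sum_le_sum fun i _ =>
    mul_le_mul_of_nonneg_right (hc _ (hM.exists_mulVec_eq_eigenvalues_smul i)) (sq_nonneg _)

end Spectral

section Gram

variable {n p : ℕ} {A : Matrix (Fin n) (Fin p) ℝ}

lemma IsLargestEigenvalue.norm_mv_sq_le {L : ℝ} (hL : IsLargestEigenvalue (Aᵀ * A) L)
    (v : Vec p) : ‖mv A v‖ ^ 2 ≤ L * ‖v‖ ^ 2 := by
  rw [← inner_mv_transpose_mul_self]
  exact (isHermitian_conjTranspose_mul_self A).inner_mv_self_le hL.2 v

lemma IsSmallestEigenvalue.mul_norm_sq_le {lam : ℝ} (hlam : IsSmallestEigenvalue (Aᵀ * A) lam)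
    (v : Vec p) : lam * ‖v‖ ^ 2 ≤ ‖mv A v‖ ^ 2 := by
  rw [← inner_mv_transpose_mul_self]
  exact (isHermitian_conjTranspose_mul_self A).le_inner_mv_self hlam.2 v

lemma mv_injective_of_rank_eq (hA : A.rank = p) : Function.Injective (mv A) := by
  have hker : LinearMap.ker A.mulVecLin = ⊥ := by
    have h := LinearMap.finrank_range_add_finrank_ker A.mulVecLin
    rw [Module.finrank_fin_fun, ← Matrix.rank, hA] at h
    exact Submodule.finrank_eq_zero.mp (by omega)
  intro u v huv
  have : u.ofLp - v.ofLp ∈ LinearMap.ker A.mulVecLin := by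
    simpa [mulVec_sub, sub_eq_zero, mv] using huv
  rw [hker, Submodule.mem_bot, sub_eq_zero] at this
  exact WithLp.ofLp_injective 2 this

lemma IsSmallestEigenvalue.pos {lam : ℝ} (hlam : IsSmallestEigenvalue (Aᵀ * A) lam)
    (hA : A.rank = p) : 0 < lam := by
  obtain ⟨v, hv0, hv⟩ := hlam.1
  have hw0 : (WithLp.toLp 2 v : Vec p) ≠ 0 := by simpa using hv0
  have hAw : mv A (WithLp.toLp 2 v) ≠ 0 := fun h0 =>
    hw0 (mv_injective_of_rank_eq hA (h0.trans (by simp [mv])))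
  have heq : lam * ‖(WithLp.toLp 2 v : Vec p)‖ ^ 2 = ‖mv A (WithLp.toLp 2 v)‖ ^ 2 := by
    rw [← inner_mv_transpose_mul_self, mv, hv, WithLp.toLp_smul, real_inner_smul_right,
      real_inner_self_eq_norm_sq]
  have := heq ▸ pow_pos (norm_pos_iff.2 hAw) 2
  exact (pos_iff_pos_of_mul_pos this).2 (by positivity)

lemma mul_norm_sq_le_norm_mv_transpose_sq {lam : ℝ} (hA : ∀ u, lam * ‖u‖ ^ 2 ≤ ‖mv A u‖ ^ 2)
    (hlam : 0 ≤ lam) {w : Vec n} (hw : w ∈ Set.range (mv A)) : lam * ‖w‖ ^ 2 ≤ ‖mv Aᵀ w‖ ^ 2 := by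
  obtain ⟨u, rfl⟩ := hw
  have hcs : ‖mv A u‖ ^ 2 ≤ ‖mv Aᵀ (mv A u)‖ * ‖u‖ := by
    rw [← real_inner_self_eq_norm_sq, ← inner_mv_transpose]
    exact real_inner_le_norm _ _
  rcases (norm_nonneg (mv A u)).eq_or_lt with h0 | hpos
  · rw [← h0]; simp
  · have hsq := mul_le_mul hcs hcs (by positivity) (by positivity)
    refine le_of_mul_le_mul_right ?_ (pow_pos hpos 2)
    nlinarith [mul_le_mul_of_nonneg_left (hA u) (sq_nonneg ‖mv Aᵀ (mv A u)‖),
      mul_le_mul_of_nonneg_left hsq hlam]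

end Gram

lemma nonneg_of_norm_sub_le_mul_norm_sub {E F : Type*} [NormedAddCommGroup E]
    [SeminormedAddCommGroup F] {φ : E → F} {L : ℝ} (hφ : ∀ a b, ‖φ a - φ b‖ ≤ L * ‖a - b‖)
    {a : E} (ha : a ≠ 0) : 0 ≤ L :=
  nonneg_of_mul_nonneg_left ((norm_nonneg _).trans (hφ a 0)) (by simpa using ha)

theorem le_add_inner_gradient_add_of_lipschitz {E : Type*} [NormedAddCommGroup E]
    [InnerProductSpace ℝ E] [CompleteSpace E] {f : E → ℝ} {L : ℝ} (hf : Differentiable ℝ f)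
    (hlip : ∀ a b, ‖gradient f a - gradient f b‖ ≤ L * ‖a - b‖) (x d : E) :
    f (x + d) ≤ f x + ⟪gradient f x, d⟫ + L / 2 * ‖d‖ ^ 2 := by
  set φ : ℝ → ℝ := fun t => f (x + t • d) - t * ⟪gradient f x, d⟫ - L / 2 * t ^ 2 * ‖d‖ ^ 2
  have hφ' : ∀ t : ℝ, HasDerivAt φ
      (⟪gradient f (x + t • d), d⟫ - ⟪gradient f x, d⟫ - L * t * ‖d‖ ^ 2) t := by
    intro t
    have hline : HasDerivAt (fun t : ℝ => x + t • d) d t := by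
      simpa using ((hasDerivAt_id t).smul_const d).const_add x
    have hfline := (hf (x + t • d)).hasGradientAt.hasFDerivAt.comp_hasDerivAt t hline
    simp only [InnerProductSpace.toDual_apply_apply] at hfline
    have h := (hfline.fun_sub ((hasDerivAt_id' t).mul_const ⟪gradient f x, d⟫)).fun_sub
      (((hasDerivAt_pow 2 t).const_mul (L / 2)).mul_const (‖d‖ ^ 2))
    exact h.congr_deriv (by push_cast; ring)
  have hanti : AntitoneOn φ (Set.Icc 0 1) := by
    refine antitoneOn_of_hasDerivWithinAt_nonpos (convex_Icc 0 1)
      (HasDerivAt.continuousOn fun t _ => hφ' t) (fun t _ => (hφ' t).hasDerivWithinAt) ?_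
    intro t ht
    rw [interior_Icc] at ht
    have hgrad : ‖gradient f (x + t • d) - gradient f x‖ ≤ L * (t * ‖d‖) := by
      simpa [norm_smul, abs_of_pos ht.1] using hlip (x + t • d) x
    have := (real_inner_le_norm _ d).trans (mul_le_mul_of_nonneg_right hgrad (norm_nonneg d))
    rw [inner_sub_left] at this
    nlinarith
  have := hanti (by simp) (by simp) zero_le_one
  simp only [φ, zero_smul, add_zero, one_smul, zero_mul, one_mul, sub_zero, ne_eq,
    OfNat.ofNat_ne_zero, not_false_eq_true, zero_pow, mul_zero, one_pow, mul_one] at this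
  linarith

lemma eq_zero_of_forall_mul_add_sq_mul_nonneg {a b : ℝ} (h : ∀ t : ℝ, 0 ≤ t * b + t ^ 2 * a) :
    b = 0 := by
  have hmin : IsLocalMin (fun t : ℝ => t * b + t ^ 2 * a) 0 :=
    IsMinOn.isLocalMin (fun t _ => by simpa using h t) Filter.univ_mem
  have hderiv : HasDerivAt (fun t : ℝ => t * b + t ^ 2 * a) b 0 := by
    simpa using ((hasDerivAt_id' 0).mul_const b).fun_add ((hasDerivAt_pow 2 (0 : ℝ)).mul_const a)
  exact hmin.hasDerivAt_eq_zero hderiv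

lemma exists_tendsto_comp_atTop_of_not_bddAbove {α : Type*} {u : α → ℝ}
    (hu : ¬BddAbove (Set.range u)) : ∃ φ : ℕ → α, Tendsto (u ∘ φ) atTop atTop := by
  have : ∀ k : ℕ, ∃ a, (k : ℝ) < u a := fun k => by
    obtain ⟨_, ⟨a, rfl⟩, hk⟩ := not_bddAbove_iff.1 hu k
    exact ⟨a, hk⟩
  choose φ hφ using this
  exact ⟨φ, tendsto_atTop_mono (fun k => (hφ k).le) tendsto_natCast_atTop_atTop⟩

lemma bddAbove_range_of_bddAbove_range_add {u : ℕ → ℝ} (m : ℕ)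
    (h : BddAbove (Set.range fun k => u (k + m))) : BddAbove (Set.range u) := by
  obtain ⟨C, hC⟩ := h
  refine IsBoundedUnder.bddAbove_range
    ⟨C, eventually_map.2 (eventually_atTop.2 ⟨m, fun k hk => ?_⟩)⟩
  obtain ⟨j, rfl⟩ := Nat.exists_eq_add_of_le' hk
  exact hC ⟨j, rfl⟩

lemma add_two_mul_le_of_descent {L d : ℕ → ℝ} (hd : ∀ k, 0 ≤ d k)
    (hdesc : ∀ k, L (k + 1) + 4 * d (k + 1) ≤ L k + 2 * d k) (k : ℕ) :
    L k + 2 * d k ≤ L 0 + 2 * d 0 := by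
  induction k with
  | zero => exact le_rfl
  | succ k ih => linarith [hdesc k, hd (k + 1)]

section LinearizedADMM

variable {p q n : ℕ} {A : Matrix (Fin n) (Fin p) ℝ} {B : Matrix (Fin n) (Fin q) ℝ}
  {g : Vec p → Vec q → ℝ} {f : Vec p → ℝ} {h : Vec q → ℝ}

lemma grady_eq_zero_of_forall_eq (hg : ∀ x y₁ y₂, g x y₁ = g x y₂) (x : Vec p) (y : Vec q) :
    grady g x y = 0 := by
  rw [grady, show g x = fun _ => g x y from funext fun y' => hg x y' y, gradient_fun_const]

lemma LipschitzDifferentiable.le_add_inner_gradient {L : ℝ} (hh : LipschitzDifferentiable h L)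
    (a b : Vec q) : h b ≤ h a + ⟪gradient h a, b - a⟫ + L / 2 * ‖b - a‖ ^ 2 := by
  have := le_add_inner_gradient_add_of_lipschitz hh.1 hh.2 a (b - a)
  rwa [add_sub_cancel] at this

lemma LipschitzDifferentiable2.norm_gradx_sub_le {L : ℝ} (hg : LipschitzDifferentiable2 g L)
    (y : Vec q) (a b : Vec p) : ‖gradx g a y - gradx g b y‖ ≤ L * ‖a - b‖ := by
  have hlip := hg.2.2 a b y y
  rw [sub_self, norm_zero, zero_pow two_ne_zero, add_zero, Real.sqrt_sq (norm_nonneg _)] at hlip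
  exact (Real.le_sqrt_of_sq_le (le_add_of_nonneg_right (sq_nonneg _))).trans hlip

lemma LipschitzDifferentiable2.le_add_inner_gradx {L : ℝ} (hg : LipschitzDifferentiable2 g L)
    (y : Vec q) (a b : Vec p) : g b y ≤ g a y + ⟪gradx g a y, b - a⟫ + L / 2 * ‖b - a‖ ^ 2 := by
  have := le_add_inner_gradient_add_of_lipschitz (hg.1 y) (hg.norm_gradx_sub_le y) a (b - a)
  rwa [add_sub_cancel] at this

variable {β Ly : ℝ}

lemma hbar_add_smul (x₁ : Vec p) (y₀ : Vec q) (γ₀ : Vec n) (y₁ v : Vec q) (t : ℝ) :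
    hbar g h A B β Ly x₁ y₀ γ₀ (y₁ + t • v) =
      hbar g h A B β Ly x₁ y₀ γ₀ y₁ +
      t * ⟪mv Bᵀ γ₀ + Ly • (y₁ - y₀) + β • mv Bᵀ (mv A x₁ + mv B y₁) +
           (grady g x₁ y₀ + gradient h y₀), v⟫ +
      t ^ 2 * (Ly / 2 * ‖v‖ ^ 2 + β / 2 * ‖mv B v‖ ^ 2) := by
  have e₁ : y₁ + t • v - y₀ = (y₁ - y₀) + t • v := by abel
  simp only [hbar, e₁, mv_add, mv_smul, norm_add_sq_real, inner_add_left, inner_add_right,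
    real_inner_smul_left, real_inner_smul_right, norm_smul, Real.norm_eq_abs, mul_pow, sq_abs,
    inner_mv_transpose]
  rw [real_inner_comm v (grady g x₁ y₀), real_inner_comm v (gradient h y₀)]
  ring

lemma hbar_first_order {x₁ : Vec p} {y₀ y₁ : Vec q} {γ₀ : Vec n}
    (hmin : ∀ y', hbar g h A B β Ly x₁ y₀ γ₀ y₁ ≤ hbar g h A B β Ly x₁ y₀ γ₀ y') :
    mv Bᵀ γ₀ + Ly • (y₁ - y₀) + β • mv Bᵀ (mv A x₁ + mv B y₁) +
      (grady g x₁ y₀ + gradient h y₀) = 0 := by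
  set G := mv Bᵀ γ₀ + Ly • (y₁ - y₀) + β • mv Bᵀ (mv A x₁ + mv B y₁) +
    (grady g x₁ y₀ + gradient h y₀)
  refine inner_self_eq_zero.mp (eq_zero_of_forall_mul_add_sq_mul_nonneg
    (a := Ly / 2 * ‖G‖ ^ 2 + β / 2 * ‖mv B G‖ ^ 2) fun t => ?_)
  have := hmin (y₁ + t • G)
  rw [hbar_add_smul] at this
  linarith

lemma mv_transpose_dual_update {x₁ : Vec p} {y₀ y₁ : Vec q} {γ₀ γ₁ : Vec n}
    (hgy : grady g x₁ y₀ = 0)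
    (hmin : ∀ y', hbar g h A B β Ly x₁ y₀ γ₀ y₁ ≤ hbar g h A B β Ly x₁ y₀ γ₀ y')
    (hγ : γ₁ = γ₀ + β • (mv A x₁ + mv B y₁)) :
    mv Bᵀ γ₁ = -(Ly • (y₁ - y₀)) - gradient h y₀ := by
  have hfoc := hbar_first_order hmin
  rw [hgy, zero_add] at hfoc
  rw [hγ, mv_add, mv_smul]
  linear_combination (norm := module) hfoc

lemma Lagr_le_of_isMin_fbar {Lx Lg LA : ℝ} {x₀ x₁ : Vec p} {y₀ : Vec q} {γ₀ : Vec n}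
    (hg : LipschitzDifferentiable2 g Lg) (hA : ∀ v, ‖mv A v‖ ^ 2 ≤ LA * ‖v‖ ^ 2) (hβ : 0 ≤ β)
    (hLx : Lg + β * LA ≤ Lx)
    (hmin : ∀ x', fbar f g A B β Lx x₀ y₀ γ₀ x₁ ≤ fbar f g A B β Lx x₀ y₀ γ₀ x') :
    Lagr β g f h A B x₁ y₀ γ₀ ≤ Lagr β g f h A B x₀ y₀ γ₀ := by
  have hfbar := hmin x₀
  have hadj : ⟪x₁ - x₀, mv Aᵀ (mv A x₀ + mv B y₀)⟫ = ⟪mv A x₀ + mv B y₀, mv A (x₁ - x₀)⟫ := by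
    rw [real_inner_comm, inner_mv_transpose]
  simp only [fbar, sub_self, norm_zero, inner_zero_left, inner_add_right, real_inner_smul_right,
    hadj] at hfbar
  have hres : mv A x₁ + mv B y₀ = (mv A x₀ + mv B y₀) + mv A (x₁ - x₀) := by
    rw [mv_sub]; abel
  have hγA : ⟪γ₀, mv A (x₁ - x₀)⟫ = ⟪γ₀, mv A x₁⟫ - ⟪γ₀, mv A x₀⟫ := by
    rw [mv_sub, inner_sub_right]
  rw [Lagr, Lagr, hres, norm_add_sq_real (mv A x₀ + mv B y₀), inner_add_right, hγA]
  nlinarith [hg.le_add_inner_gradx y₀ x₀ x₁, real_inner_comm (gradx g x₀ y₀) (x₁ - x₀),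
    mul_le_mul_of_nonneg_left (hA (x₁ - x₀)) hβ, sq_nonneg ‖x₁ - x₀‖]

lemma Lagr_le_of_isMin_hbar {Lh lam : ℝ} {x₁ : Vec p} {y₀ y₁ : Vec q} {γ₀ : Vec n}
    (hgconst : ∀ x y₁ y₂, g x y₁ = g x y₂) (hh : LipschitzDifferentiable h Lh)
    (hB : ∀ u, lam * ‖u‖ ^ 2 ≤ ‖mv B u‖ ^ 2) (hβ : 0 ≤ β)
    (hmin : ∀ y', hbar g h A B β Ly x₁ y₀ γ₀ y₁ ≤ hbar g h A B β Ly x₁ y₀ γ₀ y') :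
    Lagr β g f h A B x₁ y₁ γ₀ ≤
      Lagr β g f h A B x₁ y₀ γ₀ - (Ly - Lh / 2 + β * lam / 2) * ‖y₁ - y₀‖ ^ 2 := by
  have hexp := hbar_add_smul (g := g) (h := h) (A := A) (B := B) (β := β) (Ly := Ly)
    x₁ y₀ γ₀ y₁ (y₀ - y₁) 1
  rw [one_smul, add_sub_cancel, hbar_first_order hmin, inner_zero_left, mul_zero, add_zero,
    one_pow, one_mul, norm_sub_rev] at hexp
  simp only [hbar, sub_self, norm_zero, inner_zero_left, grady_eq_zero_of_forall_eq hgconst,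
    zero_add] at hexp
  have hB' := mul_le_mul_of_nonneg_left (hB (y₀ - y₁)) hβ
  rw [norm_sub_rev] at hB'
  simp only [Lagr, inner_add_right, hgconst x₁ y₁ y₀]
  nlinarith [hh.le_add_inner_gradient y₀ y₁, real_inner_comm (gradient h y₀) (y₁ - y₀)]

lemma Lagr_dual_update {x : Vec p} {y : Vec q} {γ₀ γ₁ : Vec n}
    (hγ : γ₁ = γ₀ + β • (mv A x + mv B y)) :
    Lagr β g f h A B x y γ₁ = Lagr β g f h A B x y γ₀ + β * ‖mv A x + mv B y‖ ^ 2 := by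
  rw [Lagr, Lagr, hγ, inner_add_left, real_inner_smul_left, real_inner_self_eq_norm_sq]
  ring

lemma sub_le_Lagr_of_mv_eq_residual {Lh lam : ℝ} {x₁ : Vec p} {y₀ y₁ s : Vec q} {γ₁ : Vec n}
    (hgconst : ∀ x y₁ y₂, g x y₁ = g x y₂) (hh : LipschitzDifferentiable h Lh)
    (hB : ∀ u, lam * ‖u‖ ^ 2 ≤ ‖mv B u‖ ^ 2) (hβ : 0 ≤ β) (hLy : 0 ≤ Ly)
    (hparam : (Lh + Ly) ^ 2 / 4 + Lh / 2 ≤ β * lam / 2)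
    (hfoc : mv Bᵀ γ₁ = -(Ly • (y₁ - y₀)) - gradient h y₀) (hs : mv B s = mv A x₁ + mv B y₁) :
    g x₁ (y₁ - s) + f x₁ + h (y₁ - s) - ‖y₁ - y₀‖ ^ 2 ≤ Lagr β g f h A B x₁ y₁ γ₁ := by
  have hdual : ⟪γ₁, mv A x₁ + mv B y₁⟫ =
      -(Ly * ⟪y₁ - y₀, s⟫) - ⟪gradient h y₀, s⟫ := by
    rw [← hs, ← inner_mv_transpose, hfoc, inner_sub_left, inner_neg_left, real_inner_smul_left]
  have hdesc := hh.le_add_inner_gradient y₁ (y₁ - s)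
  rw [sub_sub_cancel_left, inner_neg_right, norm_neg] at hdesc
  have hgrad : -(Lh * ‖y₁ - y₀‖ * ‖s‖) ≤ ⟪gradient h y₁ - gradient h y₀, s⟫ := by
    have := (abs_real_inner_le_norm (gradient h y₁ - gradient h y₀) s).trans
      (mul_le_mul_of_nonneg_right (hh.2 y₁ y₀) (norm_nonneg s))
    linarith [neg_abs_le ⟪gradient h y₁ - gradient h y₀, s⟫]
  have hds := mul_le_mul_of_nonneg_left (real_inner_le_norm (y₁ - y₀) s) hLy
  have hyoung : (Lh + Ly) * (‖y₁ - y₀‖ * ‖s‖) ≤ ‖y₁ - y₀‖ ^ 2 + (Lh + Ly) ^ 2 / 4 * ‖s‖ ^ 2 := by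
    nlinarith [sq_nonneg (‖y₁ - y₀‖ - (Lh + Ly) / 2 * ‖s‖)]
  have hres : β * lam / 2 * ‖s‖ ^ 2 ≤ β / 2 * ‖mv A x₁ + mv B y₁‖ ^ 2 := by
    rw [← hs]; nlinarith [hB s]
  rw [inner_sub_left] at hgrad
  simp only [Lagr, hdual, hgconst x₁ (y₁ - s) y₁]
  nlinarith [mul_le_mul_of_nonneg_right hparam (sq_nonneg ‖s‖)]

end LinearizedADMM

section Iterates

variable {p q n : ℕ} {A : Matrix (Fin n) (Fin p) ℝ} {B : Matrix (Fin n) (Fin q) ℝ}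
  {g : Vec p → Vec q → ℝ} {f : Vec p → ℝ} {h : Vec q → ℝ} {β Lx Ly Lg Lh LA lam : ℝ}
  {x : ℕ → Vec p} {y : ℕ → Vec q} {γ : ℕ → Vec n}

lemma residual_mem_range (himg : Set.range (mv A) ⊆ Set.range (mv B)) (u : Vec p) (v : Vec q) :
    mv A u + mv B v ∈ Set.range (mv B) := by
  obtain ⟨w, hw⟩ := himg ⟨u, rfl⟩
  exact ⟨w + v, by rw [mv_add, hw]⟩

lemma bddAbove_norm_of_coercive
    (hco : ∀ (u : ℕ → Vec p) (v : ℕ → Vec q), (∀ k, mv A (u k) + mv B (v k) = 0) →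
      Tendsto (fun k => ‖v k‖) atTop atTop →
      Tendsto (fun k => g (u k) (v k) + f (u k) + h (v k)) atTop atTop)
    {M : ℝ} {u : ℕ → Vec p} {v : ℕ → Vec q} (hfeas : ∀ k, mv A (u k) + mv B (v k) = 0)
    (hM : ∀ k, g (u k) (v k) + f (u k) + h (v k) ≤ M) :
    BddAbove (Set.range fun k => ‖v k‖) := by
  by_contra hv
  obtain ⟨φ, hφ⟩ := exists_tendsto_comp_atTop_of_not_bddAbove hv
  obtain ⟨k, hk⟩ :=
    ((hco (u ∘ φ) (v ∘ φ) (fun k => hfeas (φ k)) hφ).eventually_gt_atTop M).exists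
  exact (hM (φ k)).not_gt hk

lemma norm_sq_residual_le (hh : LipschitzDifferentiable h Lh)
    (hB : ∀ u, lam * ‖u‖ ^ 2 ≤ ‖mv B u‖ ^ 2) (hlam : 0 < lam) (hβ : 0 < β)
    (himg : Set.range (mv A) ⊆ Set.range (mv B)) (hLh : 0 ≤ Lh) (hLhLy : Lh ≤ Ly)
    (hparam : 3 * Ly ^ 2 ≤ β * lam)
    (hfoc : ∀ k, mv Bᵀ (γ (k + 1)) = -(Ly • (y (k + 1) - y k)) - gradient h (y k))
    (hγup : ∀ k, γ (k + 1) = γ k + β • (mv A (x (k + 1)) + mv B (y (k + 1)))) (k : ℕ) :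
    β * ‖mv A (x (k + 2)) + mv B (y (k + 2))‖ ^ 2 ≤
      ‖y (k + 2) - y (k + 1)‖ ^ 2 + 2 * ‖y (k + 1) - y k‖ ^ 2 := by
  obtain ⟨w, hw⟩ := residual_mem_range himg (x (k + 2)) (y (k + 2))
  have hstep : mv Bᵀ (β • mv B w) = -(Ly • (y (k + 2) - y (k + 1))) + Ly • (y (k + 1) - y k) +
      (gradient h (y k) - gradient h (y (k + 1))) := by
    have := congrArg (mv Bᵀ) (hγup (k + 1))
    rw [mv_add, hfoc, hfoc, ← hw] at this
    linear_combination (norm := module) (-1 : ℝ) • this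
  have hLy : 0 ≤ Ly := hLh.trans hLhLy
  have hnorm : ‖mv Bᵀ (β • mv B w)‖ ≤
      Ly * ‖y (k + 2) - y (k + 1)‖ + (Ly + Lh) * ‖y (k + 1) - y k‖ := by
    rw [hstep]
    refine (norm_add₃_le ..).trans ?_
    rw [norm_neg, norm_smul, norm_smul, Real.norm_of_nonneg hLy]
    have := hh.2 (y k) (y (k + 1))
    rw [norm_sub_rev (y k)] at this
    linarith
  have hlow := mul_norm_sq_le_norm_mv_transpose_sq hB hlam.le ⟨β • w, mv_smul B β w⟩
  rw [norm_smul, Real.norm_of_nonneg hβ.le, mul_pow] at hlow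
  have hsq := pow_le_pow_left₀ (norm_nonneg _) hnorm 2
  rw [hw] at hlow hsq
  set a := ‖y (k + 2) - y (k + 1)‖
  set b := ‖y (k + 1) - y k‖
  have hb : (Ly + Lh) * b ≤ 2 * Ly * b := by nlinarith [norm_nonneg (y (k + 1) - y k)]
  have hab : (Ly * a + (Ly + Lh) * b) ^ 2 ≤ 3 * Ly ^ 2 * (a ^ 2 + 2 * b ^ 2) := by
    have := pow_le_pow_left₀ (by positivity) (add_le_add_left hb (Ly * a)) 2
    nlinarith [mul_nonneg (sq_nonneg Ly) (sq_nonneg (a - b))]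
  refine le_of_mul_le_mul_left ?_ (mul_pos hβ hlam)
  nlinarith [mul_le_mul_of_nonneg_right hparam (by positivity : 0 ≤ a ^ 2 + 2 * b ^ 2)]

lemma Lagr_add_four_mul_le (hg : LipschitzDifferentiable2 g Lg) (hh : LipschitzDifferentiable h Lh)
    (hA : ∀ v, ‖mv A v‖ ^ 2 ≤ LA * ‖v‖ ^ 2) (hB : ∀ u, lam * ‖u‖ ^ 2 ≤ ‖mv B u‖ ^ 2)
    (hlam : 0 < lam) (himg : Set.range (mv A) ⊆ Set.range (mv B))
    (hgconst : ∀ x y₁ y₂, g x y₁ = g x y₂)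
    (hLx : Lg + β * LA ≤ Lx) (hLh : 0 ≤ Lh) (hLy : Lh + 3 ≤ Ly) (hparam : 3 * Ly ^ 2 ≤ β * lam)
    (hxmin : ∀ k x', fbar f g A B β Lx (x k) (y k) (γ k) (x (k + 1)) ≤
      fbar f g A B β Lx (x k) (y k) (γ k) x')
    (hymin : ∀ k y', hbar g h A B β Ly (x (k + 1)) (y k) (γ k) (y (k + 1)) ≤
      hbar g h A B β Ly (x (k + 1)) (y k) (γ k) y')
    (hfoc : ∀ k, mv Bᵀ (γ (k + 1)) = -(Ly • (y (k + 1) - y k)) - gradient h (y k))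
    (hγup : ∀ k, γ (k + 1) = γ k + β • (mv A (x (k + 1)) + mv B (y (k + 1)))) (k : ℕ) :
    Lagr β g f h A B (x (k + 2)) (y (k + 2)) (γ (k + 2)) + 4 * ‖y (k + 2) - y (k + 1)‖ ^ 2 ≤
      Lagr β g f h A B (x (k + 1)) (y (k + 1)) (γ (k + 1)) + 2 * ‖y (k + 1) - y k‖ ^ 2 := by
  have hβ : 0 < β := by nlinarith
  have hcoef : 5 ≤ Ly - Lh / 2 + β * lam / 2 := by nlinarith
  have hxstep := Lagr_le_of_isMin_fbar (h := h) hg hA hβ.le hLx (hxmin (k + 1))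
  have hystep := Lagr_le_of_isMin_hbar (f := f) hgconst hh hB hβ.le (hymin (k + 1))
  have hdual := Lagr_dual_update (g := g) (f := f) (h := h) (hγup (k + 1))
  have hres := norm_sq_residual_le hh hB hlam hβ himg hLh (by linarith) hparam hfoc hγup k
  nlinarith [mul_le_mul_of_nonneg_right hcoef (sq_nonneg ‖y (k + 2) - y (k + 1)‖)]

lemma bddAbove_norm_primal (hg : LipschitzDifferentiable2 g Lg)
    (hh : LipschitzDifferentiable h Lh)
    (hlb : ∃ c : ℝ, ∀ (x' : Vec p) (y' : Vec q),
      mv A x' + mv B y' = 0 → c ≤ g x' y' + f x' + h y')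
    (hco : ∀ (u : ℕ → Vec p) (v : ℕ → Vec q), (∀ k, mv A (u k) + mv B (v k) = 0) →
      Tendsto (fun k => ‖v k‖) atTop atTop →
      Tendsto (fun k => g (u k) (v k) + f (u k) + h (v k)) atTop atTop)
    (hA : ∀ v, ‖mv A v‖ ^ 2 ≤ LA * ‖v‖ ^ 2) (hB : ∀ u, lam * ‖u‖ ^ 2 ≤ ‖mv B u‖ ^ 2)
    (hlam : 0 < lam) (himg : Set.range (mv A) ⊆ Set.range (mv B))
    (hgconst : ∀ x y₁ y₂, g x y₁ = g x y₂)
    (hLx : Lg + β * LA ≤ Lx) (hLh : 0 ≤ Lh) (hLy : Lh + 3 ≤ Ly) (hparam : 3 * Ly ^ 2 ≤ β * lam)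
    (hxmin : ∀ k x', fbar f g A B β Lx (x k) (y k) (γ k) (x (k + 1)) ≤
      fbar f g A B β Lx (x k) (y k) (γ k) x')
    (hymin : ∀ k y', hbar g h A B β Ly (x (k + 1)) (y k) (γ k) (y (k + 1)) ≤
      hbar g h A B β Ly (x (k + 1)) (y k) (γ k) y')
    (hfoc : ∀ k, mv Bᵀ (γ (k + 1)) = -(Ly • (y (k + 1) - y k)) - gradient h (y k))
    (hγup : ∀ k, γ (k + 1) = γ k + β • (mv A (x (k + 1)) + mv B (y (k + 1)))) :
    BddAbove (Set.range fun k => ‖y k‖) := by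
  obtain ⟨c, hc⟩ := hlb
  have hβ : 0 < β := by nlinarith
  set L := fun k => Lagr β g f h A B (x (k + 1)) (y (k + 1)) (γ (k + 1))
  set d := fun k => ‖y (k + 1) - y k‖ ^ 2
  set E := L 0 + 2 * d 0
  have henergy : ∀ k, L k + 2 * d k ≤ E := add_two_mul_le_of_descent (fun k => sq_nonneg _)
    (Lagr_add_four_mul_le hg hh hA hB hlam himg hgconst hLx hLh hLy hparam hxmin hymin hfoc hγup)
  choose s hs using fun k => residual_mem_range himg (x k) (y k)
  have hfeas : ∀ k, mv A (x k) + mv B (y k - s k) = 0 := fun k => by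
    rw [mv_sub, hs k]; abel
  have hsand : ∀ k, g (x (k + 1)) (y (k + 1) - s (k + 1)) + f (x (k + 1)) +
      h (y (k + 1) - s (k + 1)) - d k ≤ L k := fun k =>
    sub_le_Lagr_of_mv_eq_residual hgconst hh hB hβ.le (by linarith) (by nlinarith) (hfoc k) (hs (k + 1))
  have hd : ∀ k, d k ≤ E - c := fun k => by
    linarith [henergy k, hsand k, hc _ _ (hfeas (k + 1))]
  obtain ⟨V, hV⟩ := bddAbove_norm_of_coercive hco (fun k => hfeas (k + 1))
    (M := E) fun k => by linarith [henergy k, hsand k, sq_nonneg ‖y (k + 1) - y k‖]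
  have hs_le : ∀ k, ‖s (k + 2)‖ ≤ √(3 * (E - c) / (β * lam)) := fun k => by
    have := norm_sq_residual_le hh hB hlam hβ himg hLh (by linarith) hparam hfoc hγup k
    rw [← hs] at this
    refine Real.le_sqrt_of_sq_le ((le_div_iff₀ (mul_pos hβ hlam)).2 ?_)
    nlinarith [hd k, hd (k + 1), hB (s (k + 2))]
  refine bddAbove_range_of_bddAbove_range_add 2 ⟨V + √(3 * (E - c) / (β * lam)), ?_⟩
  rintro _ ⟨k, rfl⟩
  have hVk : ‖y (k + 2) - s (k + 2)‖ ≤ V := hV ⟨k + 1, rfl⟩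
  have := norm_add_le (y (k + 2) - s (k + 2)) (s (k + 2))
  rw [sub_add_cancel] at this
  exact this.trans (add_le_add hVk (hs_le k))

lemma sub_mem_range_of_dual_update (himg : Set.range (mv A) ⊆ Set.range (mv B))
    (hγup : ∀ k, γ (k + 1) = γ k + β • (mv A (x (k + 1)) + mv B (y (k + 1)))) (k : ℕ) :
    γ k - γ 0 ∈ Set.range (mv B) := by
  induction k with
  | zero => exact ⟨0, by simp [mv]⟩
  | succ k ih =>
    obtain ⟨u, hu⟩ := ih
    obtain ⟨w, hw⟩ := residual_mem_range himg (x (k + 1)) (y (k + 1))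
    exact ⟨u + β • w, by rw [mv_add, mv_smul, hu, hw, hγup]; abel⟩

lemma bddAbove_norm_of_bddAbove_norm_mv_transpose (hB : ∀ u, lam * ‖u‖ ^ 2 ≤ ‖mv B u‖ ^ 2)
    (hlam : 0 < lam) {w : ℕ → Vec n} (hw : ∀ k, w k - w 0 ∈ Set.range (mv B))
    (hBw : BddAbove (Set.range fun k => ‖mv Bᵀ (w k)‖)) :
    BddAbove (Set.range fun k => ‖w k‖) := by
  obtain ⟨C, hC⟩ := hBw
  refine ⟨‖w 0‖ + √((2 * C) ^ 2 / lam), ?_⟩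
  rintro _ ⟨k, rfl⟩
  have hdiff : ‖mv Bᵀ (w k - w 0)‖ ≤ 2 * C := by
    rw [mv_sub]
    linarith [norm_sub_le (mv Bᵀ (w k)) (mv Bᵀ (w 0)), hC ⟨k, rfl⟩, hC ⟨0, rfl⟩]
  have hsub : ‖w k - w 0‖ ≤ √((2 * C) ^ 2 / lam) :=
    Real.le_sqrt_of_sq_le ((le_div_iff₀ hlam).2 (by
      nlinarith [mul_norm_sq_le_norm_mv_transpose_sq hB hlam.le (hw k),
        pow_le_pow_left₀ (norm_nonneg _) hdiff 2]))
  exact (norm_le_norm_add_norm_sub' (w k) (w 0)).trans (add_le_add_right hsub _)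

lemma bddAbove_norm_mv_transpose_dual (hh : LipschitzDifferentiable h Lh)
    (hfoc : ∀ k, mv Bᵀ (γ (k + 1)) = -(Ly • (y (k + 1) - y k)) - gradient h (y k))
    (hy : BddAbove (Set.range fun k => ‖y k‖)) :
    BddAbove (Set.range fun k => ‖mv Bᵀ (γ k)‖) := by
  obtain ⟨Y, hY⟩ := hy
  refine bddAbove_range_of_bddAbove_range_add 1
    ⟨|Ly| * (2 * Y) + (‖gradient h 0‖ + |Lh| * Y), ?_⟩
  rintro _ ⟨k, rfl⟩
  have hyk : ‖y k‖ ≤ Y := hY ⟨k, rfl⟩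
  have hstep : ‖y (k + 1) - y k‖ ≤ 2 * Y := by
    linarith [norm_sub_le (y (k + 1)) (y k), hY ⟨k + 1, rfl⟩]
  have hgrad : ‖gradient h (y k)‖ ≤ ‖gradient h 0‖ + |Lh| * Y := by
    have := hh.2 (y k) 0
    rw [sub_zero] at this
    linarith [norm_le_norm_add_norm_sub' (gradient h (y k)) (gradient h 0),
      mul_le_mul (le_abs_self Lh) hyk (norm_nonneg _) (abs_nonneg _)]
  show ‖mv Bᵀ (γ (k + 1))‖ ≤ _
  rw [hfoc]
  refine (norm_sub_le _ _).trans (add_le_add ?_ hgrad)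
  rw [norm_neg, norm_smul, Real.norm_eq_abs]
  exact mul_le_mul_of_nonneg_left hstep (abs_nonneg Ly)

end Iterates

theorem statement12_general {p q n : ℕ}
    (A : Matrix (Fin n) (Fin p) ℝ) (B : Matrix (Fin n) (Fin q) ℝ)
    (g : Vec p → Vec q → ℝ) (f : Vec p → ℝ) (h : Vec q → ℝ)
    (Lg Lh Lx Ly β Cm LA lamB : ℝ)
    (x : ℕ → Vec p) (y : ℕ → Vec q) (γ : ℕ → Vec n)
    -- Assumption 1
    (hh : LipschitzDifferentiable h Lh)
    (hg : LipschitzDifferentiable2 g Lg)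
    (hlb : ∃ c : ℝ, ∀ (x' : Vec p) (y' : Vec q),
      mv A x' + mv B y' = 0 → c ≤ g x' y' + f x' + h y')
    (hcoercive : ∀ (u : ℕ → Vec p) (v : ℕ → Vec q),
      (∀ k, mv A (u k) + mv B (v k) = 0) →
      Tendsto (fun k => ‖v k‖) atTop atTop →
      Tendsto (fun k => g (u k) (v k) + f (u k) + h (v k)) atTop atTop)
    (hrank : B.rank = q)
    (himg : Set.range (mv A) ⊆ Set.range (mv B))
    -- extreme eigenvalues of AᵀA and BᵀB
    (hLA : IsLargestEigenvalue (Aᵀ * A) LA)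
    (hlamB : IsSmallestEigenvalue (Bᵀ * B) lamB)
    -- parameter choice (★)
    (hLx : Lx ≥ Lg + β * LA + 6 * (Lg + Lh) ^ 2 + 1)
    (hLy : Ly ≥ (Lg + Lh) + (Lg + Lh) ^ 2 + 3)
    (hβ : β ≥ max (max ((Lg + Lh + Ly + 2) / lamB)
        (3 * ((Lg + Lh) ^ 2 + Ly ^ 2) / (lamB * Cm))) (3 * Ly ^ 2 / lamB))
    -- g does not depend on y
    (hgconst : ∀ (x' : Vec p) (y₁ y₂ : Vec q), g x' y₁ = g x' y₂)
    -- Algorithm 1 iterations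
    (hxmin : ∀ (k : ℕ) (x' : Vec p),
      fbar f g A B β Lx (x k) (y k) (γ k) (x (k + 1)) ≤
        fbar f g A B β Lx (x k) (y k) (γ k) x')
    (hymin : ∀ (k : ℕ) (y' : Vec q),
      hbar g h A B β Ly (x (k + 1)) (y k) (γ k) (y (k + 1)) ≤
        hbar g h A B β Ly (x (k + 1)) (y k) (γ k) y')
    (hγup : ∀ k : ℕ, γ (k + 1) = γ k + β • (mv A (x (k + 1)) + mv B (y (k + 1)))) :
    ∃ M : ℝ, ∀ k : ℕ, ‖γ k‖ ≤ M := by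
  have hlam : 0 < lamB := hlamB.pos hrank
  have hLg : 0 ≤ Lg := by
    obtain ⟨v, hv, -⟩ := hLA.1
    exact nonneg_of_norm_sub_le_mul_norm_sub (hg.norm_gradx_sub_le 0)
      (a := WithLp.toLp 2 v) (by simpa using hv)
  have hLh : 0 ≤ Lh := by
    obtain ⟨v, hv, -⟩ := hlamB.1
    exact nonneg_of_norm_sub_le_mul_norm_sub hh.2 (a := WithLp.toLp 2 v) (by simpa using hv)
  have hparam : 3 * Ly ^ 2 ≤ β * lamB := (div_le_iff₀ hlam).1 ((le_max_right _ _).trans hβ)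
  have hfoc : ∀ k, mv Bᵀ (γ (k + 1)) = -(Ly • (y (k + 1) - y k)) - gradient h (y k) := fun k =>
    mv_transpose_dual_update (grady_eq_zero_of_forall_eq hgconst _ _) (hymin k) (hγup k)
  have hy := bddAbove_norm_primal hg hh hlb hcoercive hLA.norm_mv_sq_le hlamB.mul_norm_sq_le
    hlam himg hgconst (by nlinarith) hLh (by nlinarith) hparam hxmin hymin hfoc hγup
  obtain ⟨M, hM⟩ := bddAbove_norm_of_bddAbove_norm_mv_transpose hlamB.mul_norm_sq_le hlam
    (sub_mem_range_of_dual_update himg hγup) (bddAbove_norm_mv_transpose_dual hh hfoc hy)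
  exact ⟨M, fun k => hM ⟨k, rfl⟩⟩

theorem statement12 {p q n : ℕ}
    (A : Matrix (Fin n) (Fin p) ℝ) (B : Matrix (Fin n) (Fin q) ℝ)
    (g : Vec p → Vec q → ℝ) (f : Vec p → ℝ) (h : Vec q → ℝ)
    (Lg Lh Lx Ly β Cm LA lamB : ℝ)
    (x : ℕ → Vec p) (y : ℕ → Vec q) (γ : ℕ → Vec n)
    -- Assumption 1
    (hh : LipschitzDifferentiable h Lh)
    (hg : LipschitzDifferentiable2 g Lg)
    (hlb : ∃ c : ℝ, ∀ (x' : Vec p) (y' : Vec q),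
      mv A x' + mv B y' = 0 → c ≤ g x' y' + f x' + h y')
    (hcoercive : ∀ (u : ℕ → Vec p) (v : ℕ → Vec q),
      (∀ k, mv A (u k) + mv B (v k) = 0) →
      Tendsto (fun k => ‖v k‖) atTop atTop →
      Tendsto (fun k => g (u k) (v k) + f (u k) + h (v k)) atTop atTop)
    (hrank : B.rank = q)
    (himg : Set.range (mv A) ⊆ Set.range (mv B))
    -- extreme eigenvalues of AᵀA and BᵀB
    (hLA : IsLargestEigenvalue (Aᵀ * A) LA)
    (hlamB : IsSmallestEigenvalue (Bᵀ * B) lamB)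
    (hLxpos : 0 < Lx) (hLypos : 0 < Ly) (hβpos : 0 < β)
    -- parameter choice (★)
    (hLx : Lx ≥ Lg + β * LA + 6 * (Lg + Lh) ^ 2 + 1)
    (hLy : Ly ≥ (Lg + Lh) + (Lg + Lh) ^ 2 + 3)
    (hCm : Cm = (Ly + (Lg + Lh) ^ 2) / 2)
    (hβ : β ≥ max (max ((Lg + Lh + Ly + 2) / lamB)
        (3 * ((Lg + Lh) ^ 2 + Ly ^ 2) / (lamB * Cm))) (3 * Ly ^ 2 / lamB))
    -- g does not depend on y
    (hgconst : ∀ (x' : Vec p) (y₁ y₂ : Vec q), g x' y₁ = g x' y₂)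
    -- Algorithm 1 iterations
    (hxmin : ∀ (k : ℕ) (x' : Vec p),
      fbar f g A B β Lx (x k) (y k) (γ k) (x (k + 1)) ≤
        fbar f g A B β Lx (x k) (y k) (γ k) x')
    (hymin : ∀ (k : ℕ) (y' : Vec q),
      hbar g h A B β Ly (x (k + 1)) (y k) (γ k) (y (k + 1)) ≤
        hbar g h A B β Ly (x (k + 1)) (y k) (γ k) y')
    (hγup : ∀ k : ℕ, γ (k + 1) = γ k + β • (mv A (x (k + 1)) + mv B (y (k + 1)))) :
    ∃ M : ℝ, ∀ k : ℕ, ‖γ k‖ ≤ M :=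
  statement12_general A B g f h Lg Lh Lx Ly β Cm LA lamB x y γ hh hg hlb hcoercive hrank himg hLA
    hlamB hLx hLy hβ hgconst hxmin hymin hγup
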